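/- arXiv:1210.2801 — 2 statements merged into one kernel-verified Lean document; each statement's English description precedes it below -/
import Mathlib

section
/- Let R be an (m,n,k,λ)-relative difference set in an abelian group G relative to a subgroup N, and let T be an (n/n', n', k', λ')-relative difference set in N relative to a subgroup N' of N. If kλ' - k'λ = λλ'(n - n'), then the group ring product RT ∈ ℤ[G] is the formal sum of an (mn/n', n', kk', kλ')-relative difference set in G relative to N' (in particular RT has 0/1 coefficients). -/
/-!
If `R` is a relative difference set relative to `N`, then two elements of `R` never differ by an
element of `N \ {1}` (the coefficient of `R R⁽⁻¹⁾` there is `0`). Since `T ⊆ N`, the products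
`r t` are therefore pairwise distinct, so `R T` is a genuine set of size `k k'` and
`(RT)(RT)⁽⁻¹⁾ = (R R⁽⁻¹⁾)(T T⁽⁻¹⁾)`. Expanding with `G N = n G`, `G N' = n' G`, `N N = n N`,
`N N' = n' N`, the coefficient of `G - N` becomes `λ k' + λ λ' (n - n')`, which the hypothesis
turns into `k λ'`; together with the `k λ' (N - N')` term this gives `k k' + k λ' (G - N')`.
-/

open Finset
open scoped Pointwise Classical

/-- The formal sum `∑_{x ∈ s} x` of a finite subset of a group in the
integral group ring `ℤ[G]`. -/
noncomputable def fsum {G : Type*} [Group G] [DecidableEq G] (s : Finset G) :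
    MonoidAlgebra ℤ G :=
  ∑ x ∈ s, MonoidAlgebra.single x 1

/-- `D` is an `(m,n,k,λ)`-relative difference set in `G` relative to the
subgroup `N` (with `|G| = mn`, `|N| = n`): `|D| = k` and
`D D^{(-1)} = k·1 + λ(G - N)` in `ℤ[G]`. -/
def IsRelDiffSet {G : Type*} [CommGroup G] [Fintype G] [DecidableEq G]
    (D : Finset G) (N : Subgroup G) (k lam : ℕ) : Prop :=
  D.card = k ∧
    fsum D * fsum D⁻¹ =
      (k : ℤ) • 1 + (lam : ℤ) • (fsum (univ : Finset G) - fsum (univ.filter (· ∈ N)))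

open MonoidAlgebra

section GroupRing

variable {G : Type*} [Group G] [DecidableEq G]

lemma coeff_fsum (s : Finset G) (g : G) : (fsum s).coeff g = if g ∈ s then 1 else 0 := by
  simp [fsum, coeff_sum, coeff_single, Finsupp.single_apply]

lemma coeff_fsum_mul_fsum (s t : Finset G) (g : G) :
    (fsum s * fsum t).coeff g = #{a ∈ s | a⁻¹ * g ∈ t} := by
  rw [fsum, Finset.sum_mul, coeff_sum]
  simp [coeff_fsum, Finset.sum_boole]

lemma fsum_mul_fsum_of_injOn {s t : Finset G}
    (h : (s ×ˢ t : Set (G × G)).InjOn fun p => p.1 * p.2) :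
    fsum s * fsum t = fsum (s * t) := by
  rw [fsum, fsum, fsum, Finset.sum_mul_sum, ← Finset.sum_product', ← Finset.image_mul_product,
    Finset.sum_image (by rwa [← Finset.coe_product] at h)]
  simp only [single_mul_single, mul_one]

lemma single_one_mul_fsum (x : G) (s : Finset G) : single x 1 * fsum s = fsum (x • s) := by
  rw [fsum, fsum, Finset.mul_sum, Finset.smul_finset_def,
    Finset.sum_image (MulAction.injective x).injOn]
  simp only [single_mul_single, mul_one, smul_eq_mul]

lemma fsum_mul_fsum_of_smul_eq {s t : Finset G} (h : ∀ x ∈ t, x • s = s) :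
    fsum t * fsum s = (#t : ℤ) • fsum s := by
  conv_lhs => rw [fsum, Finset.sum_mul]
  rw [Finset.sum_congr rfl fun x hx => (single_one_mul_fsum x s).trans (congrArg fsum (h x hx)),
    Finset.sum_const, natCast_zsmul]

end GroupRing

section Subgroup

variable {G : Type*} [Group G] [Fintype G] [DecidableEq G]

lemma smul_filter_mem_subgroup {H : Subgroup G} {x : G} (hx : x ∈ H) :
    (x • univ.filter (· ∈ H) : Finset G) = univ.filter (· ∈ H) := by
  ext g
  simp only [Finset.mem_smul_finset, Finset.mem_filter, Finset.mem_univ, true_and, smul_eq_mul]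
  exact ⟨fun ⟨a, ha, hag⟩ => hag ▸ H.mul_mem hx ha,
    fun hg => ⟨x⁻¹ * g, H.mul_mem (H.inv_mem hx) hg, mul_inv_cancel_left x g⟩⟩

lemma fsum_mul_fsum_univ (s : Finset G) :
    fsum s * fsum (univ : Finset G) = (#s : ℤ) • fsum (univ : Finset G) :=
  fsum_mul_fsum_of_smul_eq fun _ _ => Finset.smul_finset_univ

lemma fsum_subgroup_mul_fsum_subgroup {K H : Subgroup G} (hKH : K ≤ H) :
    fsum (univ.filter (· ∈ K)) * fsum (univ.filter (· ∈ H)) =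
      (Fintype.card K : ℤ) • fsum (univ.filter (· ∈ H)) := by
  rw [fsum_mul_fsum_of_smul_eq fun x hx => smul_filter_mem_subgroup (hKH (by simpa using hx)),
    Fintype.card_subtype]

end Subgroup

section CommGroup

variable {G : Type*} [CommGroup G]

lemma injOn_mul_of_eq_of_mul_inv_mem {H : Subgroup G} {s t : Finset G}
    (hs : ∀ a ∈ s, ∀ b ∈ s, a * b⁻¹ ∈ H → a = b) (ht : ∀ x ∈ t, x ∈ H) :
    (s ×ˢ t : Set (G × G)).InjOn fun p => p.1 * p.2 := by
  rintro ⟨a, x⟩ ⟨ha, hx⟩ ⟨b, y⟩ ⟨hb, hy⟩ (h : a * x = b * y)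
  have hab : a = b := hs a ha b hb <| by
    rw [mul_inv_eq_mul_inv_iff_mul_eq_mul.mpr (h.trans (mul_comm b y))]
    exact H.mul_mem (ht y hy) (H.inv_mem (ht x hx))
  subst hab
  rw [mul_left_cancel h]

lemma fsum_mul_mul_fsum_inv_of_injOn [DecidableEq G] {s t : Finset G}
    (h : (s ×ˢ t : Set (G × G)).InjOn fun p => p.1 * p.2) :
    fsum (s * t) * fsum (s * t)⁻¹ = (fsum s * fsum s⁻¹) * (fsum t * fsum t⁻¹) := by
  have hinv : (s⁻¹ ×ˢ t⁻¹ : Set (G × G)).InjOn fun p => p.1 * p.2 := by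
    rw [← Finset.card_mul_iff, ← mul_inv, Finset.card_inv, Finset.card_inv,
      Finset.card_inv, Finset.card_mul_iff]
    exact h
  rw [mul_inv, ← fsum_mul_fsum_of_injOn h, ← fsum_mul_fsum_of_injOn hinv]
  ring

end CommGroup

section RelDiffSet

variable {G : Type*} [CommGroup G] [Fintype G] [DecidableEq G]

lemma IsRelDiffSet.eq_of_mul_inv_mem {R : Finset G} {N : Subgroup G} {k lam : ℕ}
    (hR : IsRelDiffSet R N k lam) {a b : G} (ha : a ∈ R) (hb : b ∈ R) (hab : a * b⁻¹ ∈ N) :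
    a = b := by
  by_contra hne
  have hzero : (fsum R * fsum R⁻¹).coeff (a * b⁻¹) = 0 := by
    have hne1 : a * b⁻¹ ≠ 1 := mt mul_inv_eq_one.mp hne
    rw [hR.2, coeff_add, Finsupp.add_apply, coeff_smul_apply, coeff_smul_apply, coeff_sub,
      Finsupp.sub_apply, coeff_fsum, coeff_fsum, one_def, coeff_single,
      Finsupp.single_eq_of_ne hne1]
    simp [hab]
  rw [coeff_fsum_mul_fsum, Nat.cast_eq_zero, card_eq_zero, filter_eq_empty_iff] at hzero
  exact hzero ha (by simpa using hb)

end RelDiffSet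

/-- `g`, `ν`, `ν'` stand for the formal sums of `G ⊇ N ⊇ N'`, with `n = |N|` and `n' = |N'|`. -/
lemma relDiffSet_product_identity {A : Type*} [CommRing A] {g ν ν' : A} {n n' k k' lam lam' : ℤ}
    (hgν : ν * g = n • g) (hgν' : ν' * g = n' • g) (hνν : ν * ν = n • ν) (hνν' : ν' * ν = n' • ν)
    (hcond : k * lam' - k' * lam = lam * lam' * (n - n')) :
    (k • 1 + lam • (g - ν)) * (k' • 1 + lam' • (ν - ν')) =
      (k * k') • 1 + (k * lam') • (g - ν') := by
  have hcondA := congrArg (Int.cast : ℤ → A) hcond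
  push_cast at hcondA
  simp only [zsmul_eq_mul] at *
  push_cast
  linear_combination (lam : A) * lam' * (hgν - hgν' - hνν + hνν') - (g - ν) * hcondA

theorem stmt12_general {G : Type*} [CommGroup G] [Fintype G] [DecidableEq G]
    (N N' : Subgroup G) (hN' : N' ≤ N)
    (R T : Finset G) (n n' k k' lam lam' : ℕ)
    (hn : Fintype.card N = n)
    (hn' : Fintype.card N' = n') (hT : ∀ x ∈ T, x ∈ N)
    (hR : IsRelDiffSet R N k lam)
    (hTrds : T.card = k' ∧
      fsum T * fsum T⁻¹ =
        (k' : ℤ) • 1 +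
          (lam' : ℤ) • (fsum (univ.filter (· ∈ N)) - fsum (univ.filter (· ∈ N'))))
    (hcond : (k : ℤ) * lam' - k' * lam = lam * lam' * ((n : ℤ) - n')) :
    ∃ P : Finset G, fsum R * fsum T = fsum P ∧
      IsRelDiffSet P N' (k * k') (k * lam') := by
  subst hn hn'
  have hinj := injOn_mul_of_eq_of_mul_inv_mem (fun a ha b hb => hR.eq_of_mul_inv_mem ha hb) hT
  refine ⟨R * T, fsum_mul_fsum_of_injOn hinj, by rw [card_mul_iff.mpr hinj, hR.1, hTrds.1], ?_⟩
  rw [fsum_mul_mul_fsum_inv_of_injOn hinj, hR.2, hTrds.2]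
  push_cast
  refine relDiffSet_product_identity ?_ ?_ (fsum_subgroup_mul_fsum_subgroup le_rfl)
    (fsum_subgroup_mul_fsum_subgroup hN') hcond
  all_goals rw [fsum_mul_fsum_univ, Fintype.card_subtype]

/-- if `R` is an `(m,n,k,λ)`-relative difference set relative to
`N`, `T ⊆ N` is an `(n/n', n', k', λ')`-relative difference set in `N` relative
to `N' ≤ N`, and `kλ' - k'λ = λλ'(n - n')`, then `RT` is (the formal sum of) an
`(mn/n', n', kk', kλ')`-relative difference set in `G` relative to `N'`. -/
theorem stmt12 {G : Type*} [CommGroup G] [Fintype G] [DecidableEq G]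
    (N N' : Subgroup G) (hN' : N' ≤ N)
    (R T : Finset G) (m n n' k k' lam lam' : ℕ)
    (hG : Fintype.card G = m * n) (hn : Fintype.card N = n)
    (hn' : Fintype.card N' = n') (hT : ∀ x ∈ T, x ∈ N)
    (hR : IsRelDiffSet R N k lam)
    (hTrds : T.card = k' ∧
      fsum T * fsum T⁻¹ =
        (k' : ℤ) • 1 +
          (lam' : ℤ) • (fsum (univ.filter (· ∈ N)) - fsum (univ.filter (· ∈ N'))))
    (hcond : (k : ℤ) * lam' - k' * lam = lam * lam' * ((n : ℤ) - n')) :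
    ∃ P : Finset G, fsum R * fsum T = fsum P ∧
      IsRelDiffSet P N' (k * k') (k * lam') :=
  stmt12_general N N' hN' R T n n' k k' lam lam' hn hn' hT hR hTrds hcond
end

section
/- (Yamamoto) Let q be a prime power, l ≥ 2, and χ a non-principal character of 𝔽_{q^l}^*/𝔽_q^*, viewed as a multiplicative character of 𝔽_{q^l}^* trivial on 𝔽_q^*. Then χ(S_{q^l/q}) = −G(χ)/q, where S_{q^l/q} is the Singer difference set (image of {x : tr_{q^l/q}(x)=1} in 𝔽_{q^l}^*/𝔽_q^*) and G(χ) = ∑_{x∈𝔽_{q^l}^*} χ(x) ξ_p^{tr_{q^l/p}(x)} is the Gauss sum of χ over 𝔽_{q^l} (ξ_p a primitive p-th root of unity, p = char 𝔽_q). -/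
open Finset
open scoped Classical

/-- The relative trace `x ↦ ∑_{i<l} x^{q^i}`. -/
def relTrace {F : Type*} [CommRing F] (q l : ℕ) (x : F) : F :=
  ∑ i ∈ Finset.range l, x ^ q ^ i

/-!
The relative trace `t = tr_{F/K}` is `K`-linear and `χ` is trivial on `Kˣ`, so the character sums
`S c = ∑_{t x = c} χ x` agree for all `c ≠ 0` (substitute `x ↦ c x`), while `∑_c S c = ∑_x χ x = 0`.
By transitivity of the trace, `ξ ^ tr_{F/𝔽_p}` is `ψ ∘ t` for the nontrivial additive character
`ψ = ξ ^ tr_{K/𝔽_p}` of `K`, so `G(χ) = ∑_c ψ(c) S c = S 0 - S 1 = -q S 1`.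
-/

theorem sum_addChar_mul_eq_neg_card_mul {K R : Type*} [Ring K] [Fintype K] [CommRing R]
    [IsDomain R] {ψ : AddChar K R} (hψ : ψ ≠ 1) {S : K → R} (hS : ∀ c ≠ 0, S c = S 1)
    (hS_sum : ∑ c, S c = 0) :
    ∑ c, ψ c * S c = -(Fintype.card K : R) * S 1 := by
  have hsplit : ∀ g : K → R, ∑ c, g c * S c = g 0 * (S 0 - S 1) + (∑ c, g c) * S 1 := by
    intro g
    rw [sum_mul, ← Fintype.sum_ite_eq' 0 (fun c => g c * (S 0 - S 1)), ← sum_add_distrib]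
    refine sum_congr rfl fun c _ => ?_
    split_ifs with hc
    · rw [hc]; ring
    · rw [hS c hc, zero_add]
  have hcount := hsplit 1
  simp only [Pi.one_apply, one_mul, sum_const, card_univ, nsmul_eq_mul, mul_one, hS_sum] at hcount
  rw [hsplit, AddChar.sum_eq_zero_of_ne_one hψ, AddChar.map_zero_eq_one]
  linear_combination -hcount

section FiberSum

variable {K F R : Type*} [Field K] [Field F] [Fintype F] [Algebra K F] [CommRing R]

noncomputable def fiberSum (χ : Fˣ →* R) (f : F →ₗ[K] K) (c : K) : R :=
  ∑ x ∈ univ.filter (fun x : Fˣ => f x = c), χ x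

theorem fiberSum_eq_fiberSum_one (χ : Fˣ →* R) (f : F →ₗ[K] K)
    (hχK : ∀ y : Kˣ, χ (Units.map (algebraMap K F : K →+* F).toMonoidHom y) = 1)
    {c : K} (hc : c ≠ 0) : fiberSum χ f c = fiberSum χ f 1 := by
  set u : Fˣ := Units.map (algebraMap K F : K →+* F).toMonoidHom (Units.mk0 c hc)
  have hfu : ∀ y : Fˣ, f (u * y : Fˣ) = c * f y := fun y => by
    show f (algebraMap K F c * y) = _
    rw [← Algebra.smul_def, map_smul, smul_eq_mul]
  have hχu : χ u = 1 := hχK _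
  unfold fiberSum
  rw [sum_filter, sum_filter]
  refine (Fintype.sum_equiv (Equiv.mulLeft u) _ _ fun y => ?_).symm
  simp only [Equiv.coe_mulLeft, hfu, map_mul, hχu, one_mul, mul_eq_left₀ hc]

theorem sum_fiberSum [Fintype K] (χ : Fˣ →* R) (f : F →ₗ[K] K) :
    ∑ c : K, fiberSum χ f c = ∑ x : Fˣ, χ x :=
  sum_fiberwise _ _ _

theorem sum_mul_addChar_eq_neg_card_mul_fiberSum_one [Fintype K] [IsDomain R]
    (χ : Fˣ →* R) (hχ : χ ≠ 1)
    (hχK : ∀ y : Kˣ, χ (Units.map (algebraMap K F : K →+* F).toMonoidHom y) = 1)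
    (f : F →ₗ[K] K) (ψ : AddChar K R) (hψ : ψ ≠ 1) :
    ∑ x : Fˣ, χ x * ψ (f x) = -(Fintype.card K : R) * fiberSum χ f 1 := by
  have hfiber : ∑ x : Fˣ, χ x * ψ (f x) = ∑ c, ψ c * fiberSum χ f c := by
    rw [← sum_fiberwise univ (fun x : Fˣ => f x)]
    refine sum_congr rfl fun c _ => ?_
    rw [fiberSum, mul_sum]
    refine sum_congr rfl fun x hx => ?_
    rw [(mem_filter.mp hx).2, mul_comm]
  rw [hfiber]
  refine sum_addChar_mul_eq_neg_card_mul hψ (fun c hc => fiberSum_eq_fiberSum_one χ f hχK hc) ?_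
  rw [sum_fiberSum, sum_hom_units_eq_zero χ hχ]

end FiberSum

theorem finrank_eq_of_card_eq_pow {K F : Type*} [Field K] [Field F] [Fintype K] [Fintype F]
    [Algebra K F] {q l : ℕ} (hq : Fintype.card K = q) (hF : Fintype.card F = q ^ l) :
    Module.finrank K F = l := by
  have := Module.card_eq_pow_finrank (K := K) (V := F)
  rw [hF, hq] at this
  exact (Nat.pow_right_injective (hq ▸ Fintype.one_lt_card) this).symm

theorem relTrace_eq_algebraMap_trace {K F : Type*} [Field K] [Field F] [Fintype K] [Fintype F]
    [Algebra K F] {q l : ℕ} (hq : Fintype.card K = q) (hF : Fintype.card F = q ^ l) (x : F) :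
    relTrace q l x = algebraMap K F (Algebra.trace K F x) := by
  rw [FiniteField.algebraMap_trace_eq_sum_pow, finrank_eq_of_card_eq_pow hq hF,
    Nat.card_eq_fintype_card, hq, relTrace]

theorem zmodChar_comp_trace_ne_one {K C : Type*} [Field K] [Fintype K] {p : ℕ} [Fact p.Prime]
    [Algebra (ZMod p) K] [CommMonoid C] {ξ : C} (hξ : IsPrimitiveRoot ξ p) :
    (AddChar.zmodChar p hξ.pow_eq_one).compAddMonoidHom
      (Algebra.trace (ZMod p) K).toAddMonoidHom ≠ 1 := by
  obtain ⟨b, hb⟩ := Algebra.trace_surjective (ZMod p) K 1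
  refine AddChar.ne_one_iff.mpr ⟨b, ?_⟩
  rw [AddChar.compAddMonoidHom_apply, LinearMap.toAddMonoidHom_coe, hb, AddChar.zmodChar_apply,
    ZMod.val_one, pow_one]
  exact hξ.ne_one (Fact.out : p.Prime).one_lt

theorem stmt16_general {K F : Type*} [Field K] [Field F] [Fintype K] [Fintype F]
    [Algebra K F] (p q l : ℕ) [Fact p.Prime] [CharP F p] [Algebra (ZMod p) F]
    (hq : Fintype.card K = q) (hF : Fintype.card F = q ^ l)
    (ξ : ℂ) (hξ : IsPrimitiveRoot ξ p)
    (χ : Fˣ →* ℂ) (hχ : χ ≠ 1)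
    (hχK : ∀ y : Kˣ, χ (Units.map (algebraMap K F : K →+* F).toMonoidHom y) = 1) :
    ∑ x ∈ (univ : Finset Fˣ).filter (fun x : Fˣ => relTrace q l (x : F) = 1), χ x =
      -(∑ x : Fˣ, χ x * ξ ^ (Algebra.trace (ZMod p) F (x : F)).val) / (q : ℂ) := by
  have : CharP K p := (algebraMap K F).charP (algebraMap K F).injective p
  let : Algebra (ZMod p) K := ZMod.algebra K p
  have : IsScalarTower (ZMod p) K F := .of_algebraMap_eq fun _ => by
    rw [← RingHom.comp_apply, RingHom.ext_zmod (algebraMap (ZMod p) F)]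
  set ψ := (AddChar.zmodChar p hξ.pow_eq_one).compAddMonoidHom
    (Algebra.trace (ZMod p) K).toAddMonoidHom
  have hgauss : ∑ x : Fˣ, χ x * ξ ^ (Algebra.trace (ZMod p) F (x : F)).val =
      ∑ x : Fˣ, χ x * ψ (Algebra.trace K F x) := by
    simp only [ψ, AddChar.compAddMonoidHom_apply, LinearMap.toAddMonoidHom_coe,
      Algebra.trace_trace, AddChar.zmodChar_apply]
  have hsinger : ∑ x ∈ (univ : Finset Fˣ).filter (fun x : Fˣ => relTrace q l (x : F) = 1), χ x =
      fiberSum χ (Algebra.trace K F) 1 := by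
    refine sum_congr (filter_congr fun x _ => ?_) fun _ _ => rfl
    rw [relTrace_eq_algebraMap_trace hq hF, ← map_one (algebraMap K F),
      (algebraMap K F).injective.eq_iff]
  have hq0 : (q : ℂ) ≠ 0 := by rw [← hq]; exact_mod_cast Fintype.card_ne_zero
  rw [hsinger, hgauss, sum_mul_addChar_eq_neg_card_mul_fiberSum_one χ hχ hχK _ ψ
    (zmodChar_comp_trace_ne_one hξ), hq]
  field_simp

/-- Yamamoto: for a non-principal character `χ` of
`𝔽_{q^l}^*/𝔽_q^*` (i.e. a character of `𝔽_{q^l}^*` trivial on `𝔽_q^*`),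
`χ(S_{q^l/q}) = -G(χ)/q`, where `S_{q^l/q}` is the Singer difference set
(so `χ(S_{q^l/q}) = ∑_{tr(x)=1} χ(x)`) and
`G(χ) = ∑_{x ∈ 𝔽_{q^l}^*} χ(x) ξ_p^{tr_{q^l/p}(x)}` is the Gauss sum. -/
theorem stmt16 {K F : Type*} [Field K] [Field F] [Fintype K] [Fintype F]
    [Algebra K F] (p q l : ℕ) [Fact p.Prime] [CharP F p] [Algebra (ZMod p) F]
    (hq : Fintype.card K = q) (hF : Fintype.card F = q ^ l) (hl : 2 ≤ l)
    (ξ : ℂ) (hξ : IsPrimitiveRoot ξ p)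
    (χ : Fˣ →* ℂ) (hχ : χ ≠ 1)
    (hχK : ∀ y : Kˣ, χ (Units.map (algebraMap K F : K →+* F).toMonoidHom y) = 1) :
    ∑ x ∈ (univ : Finset Fˣ).filter (fun x : Fˣ => relTrace q l (x : F) = 1), χ x =
      -(∑ x : Fˣ, χ x * ξ ^ (Algebra.trace (ZMod p) F (x : F)).val) / (q : ℂ) :=
  stmt16_general p q l hq hF ξ hξ χ hχ hχK
end
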